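/- Let y be the disk billiard trajectory associated with θ₀ ∈ ℝ and δ ∈ (0,π) with δ/π irrational. Then the closure in ℝ² of the range {y(t) : t ≥ 0} is exactly the annulus {z ∈ ℝ² : cos(δ/2) ≤ ‖z‖ ≤ 1}. -/

import Mathlib

/-- The `k`-th bounce point `b_k = (cos(θ₀ + kδ), sin(θ₀ + kδ))` on the unit circle. -/
noncomputable def diskBounce (θ₀ δ : ℝ) (k : ℕ) : EuclideanSpace ℝ (Fin 2) :=
  WithLp.toLp 2 ![Real.cos (θ₀ + k * δ), Real.sin (θ₀ + k * δ)]

/-- The unit-speed billiard trajectory of the closed unit disk bouncing at the points `b_k`: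
with `ℓ = 2 sin(δ/2)`, `y(t) = b_k + ((t − kℓ)/ℓ)·(b_{k+1} − b_k)` for `t ∈ [kℓ, (k+1)ℓ]`. -/
noncomputable def diskBilliard (θ₀ δ : ℝ) (t : ℝ) : EuclideanSpace ℝ (Fin 2) :=
  diskBounce θ₀ δ (⌊t / (2 * Real.sin (δ / 2))⌋.toNat) +
    ((t - (⌊t / (2 * Real.sin (δ / 2))⌋.toNat : ℝ) * (2 * Real.sin (δ / 2))) /
        (2 * Real.sin (δ / 2))) •
      (diskBounce θ₀ δ (⌊t / (2 * Real.sin (δ / 2))⌋.toNat + 1) -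
        diskBounce θ₀ δ (⌊t / (2 * Real.sin (δ / 2))⌋.toNat))

open Complex Set

noncomputable def cw (δ s : ℝ) : ℂ := 1 + (s : ℂ) * (Complex.exp (δ * Complex.I) - 1)

noncomputable def cF (δ θ s : ℝ) : ℂ := Complex.exp (θ * Complex.I) * cw δ s

lemma cw_normSq (δ s : ℝ) :
    Complex.normSq (cw δ s) = 1 - 4 * Real.sin (δ/2) ^ 2 * (s * (1 - s)) := by
  have he : Complex.exp (δ * Complex.I) = (Real.cos δ : ℂ) + (Real.sin δ : ℂ) * Complex.I := by
    rw [Complex.exp_mul_I]; simp [Complex.ofReal_cos, Complex.ofReal_sin]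
  have h1 : Real.cos δ = 1 - 2 * Real.sin (δ/2) ^ 2 := by
    have h := Real.cos_two_mul (δ/2)
    rw [show 2*(δ/2) = δ by ring] at h
    have h' := Real.sin_sq_add_cos_sq (δ/2)
    linarith
  have h2 := Real.sin_sq_add_cos_sq δ
  simp only [cw, he, Complex.normSq_apply]
  simp only [Complex.add_re, Complex.add_im, Complex.one_re, Complex.one_im, Complex.mul_re,
    Complex.mul_im, Complex.ofReal_re, Complex.ofReal_im, Complex.sub_re, Complex.sub_im,
    Complex.I_re, Complex.I_im]
  linear_combination s^2 * h2 + (2*s - 2*s^2) * h1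

lemma cw_norm_sq (δ s : ℝ) : ‖cw δ s‖^2 = 1 - 4 * Real.sin (δ/2) ^ 2 * (s * (1 - s)) := by
  rw [← cw_normSq δ s, ← Complex.sq_norm]

lemma cw_norm_mem (δ : ℝ) (hδ : δ ∈ Set.Ioo (0:ℝ) Real.pi) {s : ℝ} (hs : s ∈ Set.Icc (0:ℝ) 1) :
    Real.cos (δ/2) ≤ ‖cw δ s‖ ∧ ‖cw δ s‖ ≤ 1 := by
  obtain ⟨hs0, hs1⟩ := hs
  have hsq := cw_norm_sq δ s
  have hn : (0:ℝ) ≤ ‖cw δ s‖ := norm_nonneg _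
  have hcos : Real.cos (δ/2)^2 = 1 - Real.sin (δ/2)^2 := by
    have := Real.sin_sq_add_cos_sq (δ/2); linarith
  have hc0 : 0 ≤ Real.cos (δ/2) :=
    Real.cos_nonneg_of_mem_Icc ⟨by nlinarith [Real.pi_pos, hδ.1], by nlinarith [hδ.2]⟩
  constructor
  · nlinarith [sq_nonneg (2*s - 1), sq_nonneg (Real.sin (δ/2)) , sq_nonneg (Real.sin (δ/2) * (2*s-1))]
  · nlinarith [sq_nonneg (Real.sin (δ/2)), mul_nonneg (mul_nonneg hs0 (by linarith : (0:ℝ) ≤ 1 - s)) (sq_nonneg (Real.sin (δ/2)))]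

lemma cw_zero (δ : ℝ) : cw δ 0 = 1 := by simp [cw]

lemma cw_half_norm (δ : ℝ) (hδ : δ ∈ Set.Ioo (0:ℝ) Real.pi) :
    ‖cw δ (1/2)‖ = Real.cos (δ/2) := by
  have hc0 : 0 ≤ Real.cos (δ/2) :=
    Real.cos_nonneg_of_mem_Icc ⟨by nlinarith [Real.pi_pos, hδ.1], by nlinarith [hδ.2]⟩
  have hsq := cw_norm_sq δ (1/2)
  have hcos : Real.cos (δ/2)^2 = 1 - Real.sin (δ/2)^2 := by
    have := Real.sin_sq_add_cos_sq (δ/2); linarith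
  have h : ‖cw δ (1/2)‖^2 = Real.cos (δ/2)^2 := by rw [hsq, hcos]; ring
  calc ‖cw δ (1/2)‖ = Real.sqrt (‖cw δ (1/2)‖^2) := (Real.sqrt_sq (norm_nonneg _)).symm
    _ = Real.sqrt (Real.cos (δ/2)^2) := by rw [h]
    _ = Real.cos (δ/2) := Real.sqrt_sq hc0

lemma cF_norm (δ θ s : ℝ) : ‖cF δ θ s‖ = ‖cw δ s‖ := by
  simp [cF, norm_mul, Complex.norm_exp_ofReal_mul_I]

/-- surjectivity onto the annulus -/
lemma cF_surj (δ : ℝ) (hδ : δ ∈ Set.Ioo (0:ℝ) Real.pi) (z : ℂ)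
    (hz : Real.cos (δ/2) ≤ ‖z‖ ∧ ‖z‖ ≤ 1) :
    ∃ θ : ℝ, ∃ s ∈ Set.Icc (0:ℝ) (1/2), cF δ θ s = z := by
  have hc0 : 0 < Real.cos (δ/2) := Real.cos_pos_of_mem_Ioo
    ⟨by nlinarith [Real.pi_pos, hδ.1], by nlinarith [hδ.2]⟩
  have hcont : ContinuousOn (fun s : ℝ => ‖cw δ s‖) (Set.Icc 0 (1/2)) := by
    apply Continuous.continuousOn; unfold cw; continuity
  have hIVT := intermediate_value_Icc' (by norm_num : (0:ℝ) ≤ 1/2) hcont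
  have hmem : ‖z‖ ∈ Set.Icc ((fun s : ℝ => ‖cw δ s‖) (1/2)) ((fun s : ℝ => ‖cw δ s‖) 0) := by
    simp only [cw_half_norm δ hδ, cw_zero]
    exact ⟨hz.1, by simpa using hz.2⟩
  obtain ⟨s, hs, hns⟩ := hIVT hmem
  have hwz : ‖cw δ s‖ = ‖z‖ := hns
  have hzpos : 0 < ‖z‖ := lt_of_lt_of_le hc0 hz.1
  have hwne : cw δ s ≠ 0 := by
    intro h; rw [h] at hwz; simp at hwz; exact absurd hwz.symm (ne_of_gt hzpos)
  refine ⟨z.arg - (cw δ s).arg, s, hs, ?_⟩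
  have h1 : (‖z‖:ℂ) * Complex.exp (z.arg * Complex.I) = z := by
    simpa using Complex.norm_mul_exp_arg_mul_I z
  have h2 : (‖z‖:ℂ) * Complex.exp ((cw δ s).arg * Complex.I) = cw δ s := by
    rw [← hwz]
    simpa using Complex.norm_mul_exp_arg_mul_I (cw δ s)
  set a := (cw δ s).arg with ha
  unfold cF
  rw [← h2, Complex.ofReal_sub, sub_mul, Complex.exp_sub]
  field_simp
  linear_combination h1

lemma exp_I_period (x : ℝ) (n : ℤ) :
    Complex.exp (((x + 2*Real.pi*n : ℝ)) * Complex.I) = Complex.exp ((x:ℝ) * Complex.I) := by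
  push_cast
  rw [add_mul, Complex.exp_add]
  rw [show ((2:ℂ)*Real.pi*n*Complex.I) = (n:ℂ) * (2*Real.pi*Complex.I) by ring]
  rw [Complex.exp_int_mul_two_pi_mul_I, mul_one]

lemma exp_I_period' (x y : ℝ) (n : ℤ) (h : x = y + 2*Real.pi*n) :
    Complex.exp ((x:ℝ) * Complex.I) = Complex.exp ((y:ℝ) * Complex.I) := by
  rw [h]; exact exp_I_period y n

lemma exp_I_chord (x y : ℝ) (h : |x - y| ≤ 1) :
    ‖Complex.exp ((x:ℝ) * Complex.I) - Complex.exp ((y:ℝ) * Complex.I)‖ ≤ 2 * |x - y| := by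
  have : Complex.exp ((x:ℝ)*Complex.I) - Complex.exp ((y:ℝ)*Complex.I)
      = Complex.exp ((y:ℝ)*Complex.I) * (Complex.exp (((x-y:ℝ))*Complex.I) - 1) := by
    rw [mul_sub, mul_one, ← Complex.exp_add]
    push_cast; ring_nf
  rw [this, norm_mul]
  have h1 : ‖Complex.exp ((y:ℝ)*Complex.I)‖ = 1 := by
    simp [Complex.norm_exp_ofReal_mul_I]
  rw [h1, one_mul]
  have habs : ‖(((x-y:ℝ):ℂ) * Complex.I)‖ = |x - y| := by
    rw [norm_mul, Complex.norm_I, mul_one, Complex.norm_real, Real.norm_eq_abs]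
  have := Complex.norm_exp_sub_one_le (x := ((x-y:ℝ):ℂ) * Complex.I) (by rw [habs]; exact h)
  rw [habs] at this
  exact this

/-- the subgroup δℤ + 2πℤ is dense -/
lemma dense_sub (δ : ℝ) (hirr : Irrational (δ / Real.pi)) :
    Dense ((AddSubgroup.zmultiples δ ⊔ AddSubgroup.zmultiples (2*Real.pi) : AddSubgroup ℝ) : Set ℝ) := by
  rcases AddSubgroup.dense_or_cyclic (AddSubgroup.zmultiples δ ⊔ AddSubgroup.zmultiples (2*Real.pi)) with h | ⟨a, ha⟩
  · exact h
  · exfalso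
    have hδ : δ ∈ AddSubgroup.closure ({a} : Set ℝ) := by
      rw [← ha]; exact AddSubgroup.mem_sup_left (AddSubgroup.mem_zmultiples δ)
    have hπ : (2*Real.pi) ∈ AddSubgroup.closure ({a} : Set ℝ) := by
      rw [← ha]; exact AddSubgroup.mem_sup_right (AddSubgroup.mem_zmultiples _)
    rw [AddSubgroup.mem_closure_singleton] at hδ hπ
    obtain ⟨p, hp⟩ := hδ
    obtain ⟨q, hq⟩ := hπ
    rw [zsmul_eq_mul] at hp hq
    have hq0 : (q:ℝ) ≠ 0 := by
      intro h
      rw [h, zero_mul] at hq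
      nlinarith [Real.pi_pos]
    have hπ0 : Real.pi ≠ 0 := ne_of_gt Real.pi_pos
    have key : δ / Real.pi = ((2 * p : ℚ) / (q:ℚ) : ℚ) := by
      push_cast
      rw [div_eq_div_iff hπ0 hq0]
      linear_combination (p:ℝ) * hq - (q:ℝ) * hp
    exact (hirr.ne_rat _) key

lemma dense_angles (θ₀ δ : ℝ) (hirr : Irrational (δ / Real.pi)) (φ : ℝ) {ε : ℝ} (hε : 0 < ε) :
    ∃ k : ℕ, ‖Complex.exp ((θ₀ + k * δ : ℝ) * Complex.I) - Complex.exp ((φ:ℝ) * Complex.I)‖ < ε := by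
  have hπ := Real.pi_pos
  set ε' := min (ε/4) 1 with hε'def
  have hε' : 0 < ε' := lt_min (by linarith) one_pos
  have hε'1 : ε' ≤ 1 := min_le_right _ _
  have hε'ε : 2 * ε' < ε := by
    have : ε' ≤ ε/4 := min_le_left _ _; linarith
  -- step 1: find a small nonzero element d*δ mod 2π
  obtain ⟨x, hxS, hxlt⟩ : ∃ x ∈ (AddSubgroup.zmultiples δ ⊔ AddSubgroup.zmultiples (2*Real.pi) :
      AddSubgroup ℝ), |x - ε'/2| < ε'/2 := by
    have hd := dense_sub δ hirr
    have hmem := hd (ε'/2)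
    rw [Metric.mem_closure_iff] at hmem
    obtain ⟨x, hx, hdist⟩ := hmem (ε'/2) (by linarith)
    exact ⟨x, hx, by rwa [Real.dist_eq, abs_sub_comm] at hdist⟩
  have hx0 : 0 < x := by have := abs_lt.mp hxlt; linarith [this.1]
  have hxε : x < ε' := by have := abs_lt.mp hxlt; linarith [this.2]
  obtain ⟨u, hu, v, hv, huv⟩ := (AddSubgroup.mem_sup).mp hxS
  obtain ⟨m, hm⟩ := AddSubgroup.mem_zmultiples_iff.mp hu
  obtain ⟨n, hn⟩ := AddSubgroup.mem_zmultiples_iff.mp hv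
  have hx_eq : (m:ℝ) * δ + (n:ℝ) * (2*Real.pi) = x := by
    rw [← huv, ← hm, ← hn]; push_cast [zsmul_eq_mul]; ring
  have hm0 : m ≠ 0 := by
    intro h
    rw [h] at hx_eq; push_cast at hx_eq
    rcases le_or_gt n 0 with hn0 | hn0
    · have : (n:ℝ) ≤ 0 := by exact_mod_cast hn0
      nlinarith
    · have : (1:ℝ) ≤ (n:ℝ) := by exact_mod_cast hn0
      nlinarith [Real.pi_gt_three]
  obtain ⟨d, η, M, hd, hη0, hηε, hdδ⟩ : ∃ (d : ℕ) (η : ℝ) (M : ℤ), 0 < d ∧ η ≠ 0 ∧ |η| < ε' ∧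
      (d:ℝ)*δ = η + 2*Real.pi*M := by
    have hnat : ((m.natAbs : ℕ) : ℝ) = |(m:ℝ)| := by
      rw [← Int.cast_natCast, Int.natCast_natAbs, Int.cast_abs]
    rcases lt_or_gt_of_ne hm0 with hneg | hpos
    · refine ⟨m.natAbs, -x, n, Int.natAbs_pos.mpr hm0, by simp [ne_of_gt hx0], ?_, ?_⟩
      · rw [abs_neg, abs_of_pos hx0]; exact hxε
      · have : |(m:ℝ)| = -(m:ℝ) := abs_of_neg (by exact_mod_cast hneg)
        rw [hnat, this]; linarith [hx_eq]
    · refine ⟨m.natAbs, x, -n, Int.natAbs_pos.mpr hm0, ne_of_gt hx0, ?_, ?_⟩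
      · rw [abs_of_pos hx0]; exact hxε
      · have : |(m:ℝ)| = (m:ℝ) := abs_of_pos (by exact_mod_cast hpos)
        rw [hnat, this]; push_cast; linarith [hx_eq]
  -- step 2: ℕ-multiples of η approximate any ψ mod 2π
  have main : ∀ ψ : ℝ, ∃ (j : ℕ) (N : ℤ), |(j:ℝ)*η - (ψ + 2*Real.pi*N)| < ε' := by
    intro ψ
    rcases lt_or_gt_of_ne hη0 with hneg | hpos
    · -- η < 0
      set N : ℤ := -⌈ψ/(2*Real.pi)⌉ with hN
      have hψ' : ψ + 2*Real.pi*N ≤ 0 := by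
        have h := Int.le_ceil (ψ/(2*Real.pi))
        have : ψ / (2*Real.pi) * (2*Real.pi) = ψ := div_mul_cancel₀ _ (by positivity)
        push_cast [hN]
        nlinarith
      set ψ' := ψ + 2*Real.pi*N with hψ'def
      set j : ℤ := ⌈ψ'/η⌉ with hj
      have hj0 : 0 ≤ j := Int.ceil_nonneg (by rw [← neg_div_neg_eq]; exact div_nonneg (by linarith) (by linarith))
      have h1 : ψ'/η ≤ (j:ℝ) := Int.le_ceil _
      have h2 : (j:ℝ) < ψ'/η + 1 := by exact_mod_cast Int.ceil_lt_add_one (ψ'/η)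
      have e1 : (j:ℝ)*η ≤ ψ' := by
        have := mul_le_mul_of_nonpos_right h1 hneg.le
        rwa [div_mul_cancel₀ _ (ne_of_lt hneg)] at this
      have e2 : ψ' + η < (j:ℝ)*η := by
        have := mul_lt_mul_of_neg_right h2 hneg
        rwa [add_mul, one_mul, div_mul_cancel₀ _ (ne_of_lt hneg)] at this
      refine ⟨j.toNat, N, ?_⟩
      have hc : ((j.toNat : ℕ) : ℝ) = (j:ℝ) := by exact_mod_cast Int.toNat_of_nonneg hj0
      rw [hc, abs_lt]
      have habs : |η| = -η := abs_of_neg hneg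
      constructor <;> linarith
    · -- η > 0
      set N : ℤ := ⌈-ψ/(2*Real.pi)⌉ with hN
      have hψ' : 0 ≤ ψ + 2*Real.pi*N := by
        have h := Int.le_ceil (-ψ/(2*Real.pi))
        have : -ψ / (2*Real.pi) * (2*Real.pi) = -ψ := div_mul_cancel₀ _ (by positivity)
        push_cast [hN]
        nlinarith
      set ψ' := ψ + 2*Real.pi*N with hψ'def
      set j : ℤ := ⌈ψ'/η⌉ with hj
      have hj0 : 0 ≤ j := Int.ceil_nonneg (div_nonneg hψ' hpos.le)
      have h1 : ψ'/η ≤ (j:ℝ) := Int.le_ceil _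
      have h2 : (j:ℝ) < ψ'/η + 1 := by exact_mod_cast Int.ceil_lt_add_one (ψ'/η)
      have e1 : ψ' ≤ (j:ℝ)*η := by
        have := mul_le_mul_of_nonneg_right h1 hpos.le
        rwa [div_mul_cancel₀ _ (ne_of_gt hpos)] at this
      have e2 : (j:ℝ)*η < ψ' + η := by
        have := mul_lt_mul_of_pos_right h2 hpos
        rwa [add_mul, one_mul, div_mul_cancel₀ _ (ne_of_gt hpos)] at this
      refine ⟨j.toNat, N, ?_⟩
      have hc : ((j.toNat : ℕ) : ℝ) = (j:ℝ) := by exact_mod_cast Int.toNat_of_nonneg hj0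
      rw [hc, abs_lt]
      have habs : |η| = η := abs_of_pos hpos
      constructor <;> linarith
  -- step 3: assemble
  obtain ⟨j, N, hjN⟩ := main (φ - θ₀)
  refine ⟨j * d, ?_⟩
  have he1 : Complex.exp ((θ₀ + ↑(j*d) * δ : ℝ) * Complex.I)
      = Complex.exp ((θ₀ + (j:ℝ)*η : ℝ) * Complex.I) :=
    exp_I_period' _ _ ((j:ℤ)*M) (by push_cast; linear_combination (j:ℝ) * hdδ)
  have he2 : Complex.exp ((φ:ℝ) * Complex.I)
      = Complex.exp ((θ₀ + ((φ - θ₀) + 2*Real.pi*N) : ℝ) * Complex.I) :=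
    (exp_I_period' _ _ N (by ring)).symm
  rw [he1, he2]
  have hch := exp_I_chord (θ₀ + (j:ℝ)*η) (θ₀ + ((φ - θ₀) + 2*Real.pi*N))
    (by rw [show θ₀ + (j:ℝ)*η - (θ₀ + ((φ - θ₀) + 2*Real.pi*N)) = (j:ℝ)*η - ((φ - θ₀) + 2*Real.pi*N) by ring]
        linarith [hjN])
  rw [show θ₀ + (j:ℝ)*η - (θ₀ + ((φ - θ₀) + 2*Real.pi*N)) = (j:ℝ)*η - ((φ - θ₀) + 2*Real.pi*N) by ring] at hch
  exact lt_of_le_of_lt hch (by linarith [hjN])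

noncomputable def cB (θ₀ δ : ℝ) (k : ℕ) : ℂ := Complex.exp ((θ₀ + k * δ : ℝ) * Complex.I)

noncomputable def cTraj (θ₀ δ : ℝ) (t : ℝ) : ℂ :=
  cB θ₀ δ (⌊t / (2 * Real.sin (δ / 2))⌋.toNat) +
    ((t - (⌊t / (2 * Real.sin (δ / 2))⌋.toNat : ℝ) * (2 * Real.sin (δ / 2))) /
        (2 * Real.sin (δ / 2))) •
      (cB θ₀ δ (⌊t / (2 * Real.sin (δ / 2))⌋.toNat + 1) -
        cB θ₀ δ (⌊t / (2 * Real.sin (δ / 2))⌋.toNat))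

lemma chord (θ₀ δ : ℝ) (k : ℕ) (s : ℝ) :
    cB θ₀ δ k + s • (cB θ₀ δ (k+1) - cB θ₀ δ k) = cF δ (θ₀ + k*δ) s := by
  have hsucc : cB θ₀ δ (k+1) = cB θ₀ δ k * Complex.exp ((δ:ℝ)*Complex.I) := by
    unfold cB; rw [← Complex.exp_add]; congr 1; push_cast; ring
  rw [hsucc, Complex.real_smul]
  unfold cF cw cB
  ring

lemma diskBilliard_eq (θ₀ δ t : ℝ) :
    diskBilliard θ₀ δ t = Complex.orthonormalBasisOneI.repr (cTraj θ₀ δ t) := by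
  have hb : ∀ k : ℕ, Complex.orthonormalBasisOneI.repr (cB θ₀ δ k) = diskBounce θ₀ δ k := by
    intro k
    unfold cB diskBounce
    ext i
    rw [Complex.orthonormalBasisOneI_repr_apply, Complex.exp_ofReal_mul_I_re,
      Complex.exp_ofReal_mul_I_im]
  unfold diskBilliard cTraj
  simp only [map_add, map_smul, map_sub, hb]

lemma traj_param {θ₀ δ : ℝ} (hℓ : 0 < 2 * Real.sin (δ/2)) (k : ℕ) {s : ℝ}
    (hs : s ∈ Set.Ico (0:ℝ) 1) :
    cTraj θ₀ δ (((k:ℝ) + s) * (2 * Real.sin (δ/2))) = cF δ (θ₀ + k*δ) s ∧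
      (0:ℝ) ≤ ((k:ℝ) + s) * (2 * Real.sin (δ/2)) := by
  set ℓ := 2 * Real.sin (δ/2) with hℓdef
  have h1 : (((k:ℝ)+s)*ℓ)/ℓ = (k:ℝ)+s := by field_simp
  have h2 : ⌊(k:ℝ)+s⌋ = (k:ℤ) := by
    rw [show ((k:ℝ)+s) = s + (k:ℕ) by push_cast; ring, Int.floor_add_natCast,
      Int.floor_eq_zero_iff.mpr hs, zero_add]
  have h3 : ⌊(((k:ℝ)+s)*ℓ)/ℓ⌋.toNat = k := by rw [h1, h2]; simp
  constructor
  · unfold cTraj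
    rw [← hℓdef, h3]
    have h4 : ((((k:ℝ)+s)*ℓ - (k:ℝ)*ℓ)/ℓ) = s := by field_simp; ring
    rw [h4]
    exact chord θ₀ δ k s
  · have hks : (0:ℝ) ≤ (k:ℝ) + s := by have := hs.1; positivity
    exact mul_nonneg hks hℓ.le

lemma traj_mem {θ₀ δ : ℝ} (hℓ : 0 < 2 * Real.sin (δ/2)) {t : ℝ} (ht : 0 ≤ t) :
    ∃ (k : ℕ) (s : ℝ), s ∈ Set.Ico (0:ℝ) 1 ∧ cTraj θ₀ δ t = cF δ (θ₀ + k*δ) s := by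
  unfold cTraj
  set ℓ := 2 * Real.sin (δ/2) with hℓdef
  set k : ℕ := ⌊t/ℓ⌋.toNat with hk
  have hfl : ((k:ℕ):ℝ) = ((⌊t/ℓ⌋ : ℤ) : ℝ) := by
    rw [hk]; exact_mod_cast Int.toNat_of_nonneg (Int.floor_nonneg.mpr (div_nonneg ht hℓ.le))
  set s : ℝ := (t - (k:ℝ)*ℓ)/ℓ with hsdef
  have hs_eq : s = Int.fract (t/ℓ) := by
    rw [hsdef, hfl, Int.fract]
    field_simp
  have hs : s ∈ Set.Ico (0:ℝ) 1 := by
    rw [hs_eq]; exact ⟨Int.fract_nonneg _, Int.fract_lt_one _⟩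
  exact ⟨k, s, hs, chord θ₀ δ k s⟩

lemma key (θ₀ δ : ℝ) (hδ : δ ∈ Set.Ioo (0:ℝ) Real.pi) (hirr : Irrational (δ / Real.pi)) :
    closure (cTraj θ₀ δ '' Set.Ici (0:ℝ)) =
      {w : ℂ | Real.cos (δ/2) ≤ ‖w‖ ∧ ‖w‖ ≤ 1} := by
  have hπ := Real.pi_pos
  have hs2 : 0 < Real.sin (δ/2) :=
    Real.sin_pos_of_pos_of_lt_pi (by linarith [hδ.1]) (by linarith [hδ.2])
  have hℓ : 0 < 2 * Real.sin (δ/2) := by linarith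
  apply subset_antisymm
  · apply closure_minimal
    · rintro w ⟨t, ht, rfl⟩
      obtain ⟨k, s, hs, heq⟩ := traj_mem hℓ ht
      rw [heq, Set.mem_setOf_eq, cF_norm]
      exact cw_norm_mem δ hδ ⟨hs.1, hs.2.le⟩
    · exact (isClosed_le continuous_const continuous_norm).inter
        (isClosed_le continuous_norm continuous_const)
  · rintro z ⟨hz1, hz2⟩
    rw [Metric.mem_closure_iff]
    intro ε hε
    obtain ⟨θ, s, hs, hFz⟩ := cF_surj δ hδ z ⟨hz1, hz2⟩
    obtain ⟨k, hk⟩ := dense_angles θ₀ δ hirr θ hε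
    have hs' : s ∈ Set.Ico (0:ℝ) 1 := ⟨hs.1, by linarith [hs.2]⟩
    obtain ⟨htraj, ht0⟩ := traj_param (θ₀ := θ₀) hℓ k hs'
    refine ⟨cTraj θ₀ δ (((k:ℝ) + s) * (2*Real.sin (δ/2))), ⟨_, ht0, rfl⟩, ?_⟩
    rw [htraj, dist_eq_norm, ← hFz]
    have hdiff : cF δ θ s - cF δ (θ₀ + k*δ) s
        = (Complex.exp ((θ:ℝ)*Complex.I) - Complex.exp ((θ₀+k*δ:ℝ)*Complex.I)) * cw δ s := by
      unfold cF; ring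
    rw [hdiff, norm_mul]
    have hw1 : ‖cw δ s‖ ≤ 1 := (cw_norm_mem δ hδ ⟨hs.1, by linarith [hs.2]⟩).2
    have hk' : ‖Complex.exp ((θ:ℝ)*Complex.I) - Complex.exp ((θ₀+k*δ:ℝ)*Complex.I)‖ < ε := by
      rw [norm_sub_rev]; exact hk
    calc ‖Complex.exp ((θ:ℝ)*Complex.I) - Complex.exp ((θ₀+k*δ:ℝ)*Complex.I)‖ * ‖cw δ s‖
        ≤ ‖Complex.exp ((θ:ℝ)*Complex.I) - Complex.exp ((θ₀+k*δ:ℝ)*Complex.I)‖ * 1 :=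
          mul_le_mul_of_nonneg_left hw1 (norm_nonneg _)
      _ < ε := by rw [mul_one]; exact hk'

/-- The closure of a nonperiodic disk billiard trajectory (bounce angle `δ`, `δ/π` irrational)
is exactly the annulus `{z : cos(δ/2) ≤ ‖z‖ ≤ 1}`. -/
theorem statement_9 (θ₀ δ : ℝ) (hδ : δ ∈ Set.Ioo (0 : ℝ) Real.pi)
    (hirr : Irrational (δ / Real.pi)) :
    closure (diskBilliard θ₀ δ '' Set.Ici (0 : ℝ)) =
      {z : EuclideanSpace ℝ (Fin 2) | Real.cos (δ / 2) ≤ ‖z‖ ∧ ‖z‖ ≤ 1} := by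

  have hmain := key θ₀ δ hδ hirr
  have himg : diskBilliard θ₀ δ '' Set.Ici (0:ℝ)
      = Complex.orthonormalBasisOneI.repr '' (cTraj θ₀ δ '' Set.Ici (0:ℝ)) := by
    rw [← Set.image_comp]
    exact Set.image_congr fun t _ => diskBilliard_eq θ₀ δ t
  have hcl : closure (Complex.orthonormalBasisOneI.repr '' (cTraj θ₀ δ '' Set.Ici (0:ℝ)))
      = Complex.orthonormalBasisOneI.repr '' closure (cTraj θ₀ δ '' Set.Ici (0:ℝ)) := by
    have := (Complex.orthonormalBasisOneI.repr.toHomeomorph).image_closure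
      (cTraj θ₀ δ '' Set.Ici (0:ℝ))
    simpa using this.symm
  rw [himg, hcl, hmain]
  ext z
  constructor
  · rintro ⟨w, hw, rfl⟩
    have h := Complex.orthonormalBasisOneI.repr.norm_map w
    exact ⟨by rw [h]; exact hw.1, by rw [h]; exact hw.2⟩
  · intro hz
    refine ⟨Complex.orthonormalBasisOneI.repr.symm z, ?_,
      Complex.orthonormalBasisOneI.repr.apply_symm_apply z⟩
    have h := Complex.orthonormalBasisOneI.repr.symm.norm_map z
    exact ⟨by rw [h]; exact hz.1, by rw [h]; exact hz.2⟩
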